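/- (Explicit global harmonic morphism.) For every m ≥ 3, the map φ : ℂ^m → ℂ defined by φ(q) = (q^1 − q^m q̄^2)(q^2 + q^m q̄^1) · q^3 q^4 ⋯ q^{m−1} (the product q^3⋯q^{m−1} being empty, i.e. equal to 1, when m = 3) satisfies Δφ = 0 and Σ_{i=1}^{2m} (∂φ/∂x^i)² = 0 at every point of ℂ^m ≅ ℝ^{2m}; i.e. φ is a globally defined harmonic morphism. -/

import Mathlib

open Complex BigOperators Matrix

/-- Partial derivative in the direction of the real coordinate `x^{2j-1}`,
identifying `ℝ^{2m} ≅ ℂ^m` via `q^j = x^{2j-1} + i x^{2j}`. -/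
noncomputable def pdRe {m : ℕ} (f : (Fin m → ℂ) → ℂ) (j : Fin m) (x : Fin m → ℂ) : ℂ :=
  fderiv ℝ f x (Pi.single j 1)

/-- Partial derivative in the direction of the real coordinate `x^{2j}`. -/
noncomputable def pdIm {m : ℕ} (f : (Fin m → ℂ) → ℂ) (j : Fin m) (x : Fin m → ℂ) : ℂ :=
  fderiv ℝ f x (Pi.single j Complex.I)

/-- Wirtinger derivative `∂f/∂q^j = ½(∂f/∂x^{2j-1} − i ∂f/∂x^{2j})`. -/
noncomputable def wdq {m : ℕ} (f : (Fin m → ℂ) → ℂ) (j : Fin m) (x : Fin m → ℂ) : ℂ :=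
  (pdRe f j x - Complex.I * pdIm f j x) / 2

/-- Wirtinger derivative `∂f/∂q̄^j = ½(∂f/∂x^{2j-1} + i ∂f/∂x^{2j})`. -/
noncomputable def wdqbar {m : ℕ} (f : (Fin m → ℂ) → ℂ) (j : Fin m) (x : Fin m → ℂ) : ℂ :=
  (pdRe f j x + Complex.I * pdIm f j x) / 2

/-- Laplacian `Δf = Σ_{i=1}^{2m} ∂²f/(∂x^i)²`. -/
noncomputable def lap {m : ℕ} (f : (Fin m → ℂ) → ℂ) (x : Fin m → ℂ) : ℂ :=
  ∑ j, (pdRe (fun y => pdRe f j y) j x + pdIm (fun y => pdIm f j y) j x)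

/-- The horizontal weak conformality quantity `Σ_{i=1}^{2m} (∂f/∂x^i)²`. -/
noncomputable def hwc {m : ℕ} (f : (Fin m → ℂ) → ℂ) (x : Fin m → ℂ) : ℂ :=
  ∑ j, ((pdRe f j x) ^ 2 + (pdIm f j x) ^ 2)

/-- The explicit map `φ(q) = (q¹ − q^m q̄²)(q² + q^m q̄¹)·q³⋯q^{m−1}` (0-based
indices: `(q 0 − q (m−1)·conj (q 1))·(q 1 + q (m−1)·conj (q 0))` times the
product of `q j` over `2 ≤ j ≤ m − 2`, an empty product when `m = 3`). -/
noncomputable def phiGlobal (m : ℕ) (hm : 3 ≤ m) : (Fin m → ℂ) → ℂ :=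
  fun q =>
    (q ⟨0, by omega⟩ - q ⟨m - 1, by omega⟩ * starRingEnd ℂ (q ⟨1, by omega⟩)) *
    (q ⟨1, by omega⟩ + q ⟨m - 1, by omega⟩ * starRingEnd ℂ (q ⟨0, by omega⟩)) *
    ∏ j : Fin m, (if 2 ≤ (j : ℕ) ∧ (j : ℕ) ≤ m - 2 then q j else 1)

/-! Both `lap` and `hwc` are sums over the complex coordinates `j` of the corresponding
quantities `lap₁`, `hwc₁` of the restriction `z ↦ φ(q with q^j replaced by z)`. In every
coordinate other than `q¹, q²` this restriction is holomorphic, so it contributes nothing: for a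
holomorphic `g` one has `∂g/∂y = i ∂g/∂x`. In `q¹` and `q²` the restriction has the form
`(a z + b)(c z̄ + d)`, whose `lap₁` is `4ac` and whose `hwc₁` is `4ac` times its value; the products
`ac` are `P q^m` and `-P q^m` with `P = q³⋯q^{m-1}`, so the two contributions cancel. -/

open Function

@[fun_prop]
theorem contDiff_conj {n : WithTop ℕ∞} : ContDiff ℝ n fun z : ℂ => starRingEnd ℂ z :=
  conjCLE.contDiff

@[fun_prop]
theorem differentiable_update_apply {𝕜 ι E : Type*} [NontriviallyNormedField 𝕜] [DecidableEq ι]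
    [Fintype ι] [NormedAddCommGroup E] [NormedSpace 𝕜 E] (x : ι → E) (j k : ι) :
    Differentiable 𝕜 fun z : E => update x j z k :=
  fun z => differentiableAt_pi.1 (hasFDerivAt_update (𝕜 := 𝕜) x z).differentiableAt k

section LineDerivatives

variable {𝕜 ι E F : Type*} [NontriviallyNormedField 𝕜] [Fintype ι] [DecidableEq ι]
  [NormedAddCommGroup E] [NormedSpace 𝕜 E] [NormedAddCommGroup F] [NormedSpace 𝕜 F]
  {f : (ι → E) → F}

theorem fderiv_apply_single_eq_fderiv_update {x : ι → E} {j : ι} {z : E}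
    (hf : DifferentiableAt 𝕜 f (update x j z)) (v : E) :
    fderiv 𝕜 f (update x j z) (Pi.single j v) = fderiv 𝕜 (fun w => f (update x j w)) z v := by
  change _ = fderiv 𝕜 (f ∘ update x j) z v
  rw [fderiv_comp z hf (hasFDerivAt_update x z).differentiableAt, fderiv_update,
    ContinuousLinearMap.comp_apply]
  congr 1
  funext i
  simp [Pi.single_apply, apply_ite (fun L : E →L[𝕜] E => L v)]

theorem fderiv_fderiv_apply_single_eq (hf : ContDiff 𝕜 2 f) (x : ι → E) (j : ι) (v : E) :
    fderiv 𝕜 (fun y => fderiv 𝕜 f y (Pi.single j v)) x (Pi.single j v) =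
      fderiv 𝕜 (fun w => fderiv 𝕜 (fun z => f (update x j z)) w v) (x j) v := by
  have hf₁ : Differentiable 𝕜 f := hf.differentiable two_ne_zero
  have hf₂ : Differentiable 𝕜 fun y => fderiv 𝕜 f y (Pi.single j v) :=
    ((hf.fderiv_right (m := 1) (by norm_num)).differentiable one_ne_zero).clm_apply
      (differentiable_const _)
  conv_lhs => rw [← update_eq_self j x]
  rw [fderiv_apply_single_eq_fderiv_update (hf₂ _)]
  simp only [fderiv_apply_single_eq_fderiv_update (hf₁ _)]

end LineDerivatives

noncomputable def lap₁ (g : ℂ → ℂ) (z : ℂ) : ℂ :=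
  fderiv ℝ (fun w => fderiv ℝ g w 1) z 1 + fderiv ℝ (fun w => fderiv ℝ g w I) z I

noncomputable def hwc₁ (g : ℂ → ℂ) (z : ℂ) : ℂ :=
  fderiv ℝ g z 1 ^ 2 + fderiv ℝ g z I ^ 2

theorem lap_eq_sum_lap₁ {m : ℕ} {f : (Fin m → ℂ) → ℂ} (hf : ContDiff ℝ 2 f) (x : Fin m → ℂ) :
    lap f x = ∑ j, lap₁ (fun z => f (update x j z)) (x j) := by
  simp only [lap, lap₁, pdRe, pdIm, fderiv_fderiv_apply_single_eq hf]

theorem hwc_eq_sum_hwc₁ {m : ℕ} {f : (Fin m → ℂ) → ℂ} (hf : Differentiable ℝ f)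
    (x : Fin m → ℂ) : hwc f x = ∑ j, hwc₁ (fun z => f (update x j z)) (x j) := by
  refine Finset.sum_congr rfl fun j _ => ?_
  have hx : update x j (x j) = x := update_eq_self j x
  simp only [hwc₁, pdRe, pdIm, ← fderiv_apply_single_eq_fderiv_update (hx ▸ hf x), hx]

theorem fderiv_real_apply_eq_mul_deriv {g : ℂ → ℂ} {w : ℂ} (hg : DifferentiableAt ℂ g w)
    (c : ℂ) : fderiv ℝ g w c = c * deriv g w := by
  simp [hg.fderiv_restrictScalars ℝ]

theorem Differentiable.hwc₁_eq_zero {g : ℂ → ℂ} (hg : Differentiable ℂ g) (z : ℂ) :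
    hwc₁ g z = 0 := by
  simp only [hwc₁, fderiv_real_apply_eq_mul_deriv (hg z)]
  linear_combination _root_.deriv g z ^ 2 * I_sq

theorem Differentiable.lap₁_eq_zero {g : ℂ → ℂ} (hg : Differentiable ℂ g) (z : ℂ) :
    lap₁ g z = 0 := by
  have hg' := hg.deriv
  simp only [lap₁, fderiv_real_apply_eq_mul_deriv (hg _), one_mul]
  rw [fderiv_real_apply_eq_mul_deriv (hg' z),
    fderiv_real_apply_eq_mul_deriv ((hg'.const_mul I) z), deriv_const_mul _ (hg' z)]
  linear_combination _root_.deriv (_root_.deriv g) z * I_sq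

theorem hasFDerivAt_affine_conj (α β γ w : ℂ) :
    HasFDerivAt (fun z => α * z + β * starRingEnd ℂ z + γ)
      (α • ContinuousLinearMap.id ℝ ℂ + β • conjCLE.toContinuousLinearMap) w := by
  simpa using (((hasFDerivAt_id w).const_smul α).add
    (conjCLE.toContinuousLinearMap.hasFDerivAt.const_smul β)).add_const γ

section MulConj

variable (a b c d : ℂ)

theorem fderiv_mul_conj_apply (w v : ℂ) :
    fderiv ℝ (fun z => (a * z + b) * (c * starRingEnd ℂ z + d)) w v =
      a * v * (c * starRingEnd ℂ w + d) + (a * w + b) * (c * starRingEnd ℂ v) := by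
  have h₁ := hasFDerivAt_affine_conj a 0 b w
  have h₂ := hasFDerivAt_affine_conj 0 c d w
  simp only [zero_mul, add_zero, zero_add] at h₁ h₂
  rw [(h₁.fun_mul h₂).fderiv]
  simp
  ring

theorem fderiv_fderiv_mul_conj_apply (z v : ℂ) :
    fderiv ℝ (fun w => fderiv ℝ (fun z => (a * z + b) * (c * starRingEnd ℂ z + d)) w v) z v =
      2 * a * c * (v * starRingEnd ℂ v) := by
  have h : (fun w => fderiv ℝ (fun z => (a * z + b) * (c * starRingEnd ℂ z + d)) w v) =
      fun w => a * c * starRingEnd ℂ v * w + a * v * c * starRingEnd ℂ w +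
        (a * v * d + b * c * starRingEnd ℂ v) := by
    funext w
    rw [fderiv_mul_conj_apply]
    ring
  rw [h, (hasFDerivAt_affine_conj _ _ _ z).fderiv]
  simp
  ring

theorem lap₁_mul_conj (z : ℂ) :
    lap₁ (fun z => (a * z + b) * (c * starRingEnd ℂ z + d)) z = 4 * a * c := by
  simp only [lap₁, fderiv_fderiv_mul_conj_apply, map_one, conj_I]
  linear_combination (-2 * a * c) * I_sq

theorem hwc₁_mul_conj (z : ℂ) :
    hwc₁ (fun z => (a * z + b) * (c * starRingEnd ℂ z + d)) z =
      4 * a * c * ((a * z + b) * (c * starRingEnd ℂ z + d)) := by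
  simp only [hwc₁, fderiv_mul_conj_apply, map_one, conj_I]
  linear_combination (a * (c * starRingEnd ℂ z + d) - (a * z + b) * c) ^ 2 * I_sq

end MulConj

def middleProd (m : ℕ) (q : Fin m → ℂ) : ℂ :=
  ∏ j : Fin m, if 2 ≤ (j : ℕ) ∧ (j : ℕ) ≤ m - 2 then q j else 1

theorem middleProd_update_of_not_mem {m : ℕ} (q : Fin m → ℂ) {i : Fin m}
    (hi : ¬(2 ≤ (i : ℕ) ∧ (i : ℕ) ≤ m - 2)) (z : ℂ) :
    middleProd m (update q i z) = middleProd m q := by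
  refine Finset.prod_congr rfl fun k _ => ?_
  split_ifs with hk
  · exact update_of_ne (show k ≠ i by rintro rfl; exact hi hk) z q
  · rfl

theorem contDiff_phiGlobal {m : ℕ} (hm : 3 ≤ m) : ContDiff ℝ 2 (phiGlobal m hm) := by
  unfold phiGlobal
  simp only [← Finset.prod_filter]
  fun_prop

section Restrictions

variable {m : ℕ} (hm : 3 ≤ m) (q : Fin m → ℂ)

theorem phiGlobal_update_zero :
    (fun z => phiGlobal m hm (update q ⟨0, by omega⟩ z)) = fun z =>
      (middleProd m q * z +
          -(middleProd m q * (q ⟨m - 1, by omega⟩ * starRingEnd ℂ (q ⟨1, by omega⟩)))) *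
        (q ⟨m - 1, by omega⟩ * starRingEnd ℂ z + q ⟨1, by omega⟩) := by
  funext z
  have h₁ : (⟨1, by omega⟩ : Fin m) ≠ ⟨0, by omega⟩ := by simp
  have hₘ : (⟨m - 1, by omega⟩ : Fin m) ≠ ⟨0, by omega⟩ := by
    simp only [ne_eq, Fin.mk.injEq]; omega
  rw [phiGlobal, ← middleProd, middleProd_update_of_not_mem q (by simp) z, update_self,
    update_of_ne h₁, update_of_ne hₘ]
  ring

theorem phiGlobal_update_one :
    (fun z => phiGlobal m hm (update q ⟨1, by omega⟩ z)) = fun z =>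
      (middleProd m q * z +
          middleProd m q * (q ⟨m - 1, by omega⟩ * starRingEnd ℂ (q ⟨0, by omega⟩))) *
        (-q ⟨m - 1, by omega⟩ * starRingEnd ℂ z + q ⟨0, by omega⟩) := by
  funext z
  have h₀ : (⟨0, by omega⟩ : Fin m) ≠ ⟨1, by omega⟩ := by simp
  have hₘ : (⟨m - 1, by omega⟩ : Fin m) ≠ ⟨1, by omega⟩ := by
    simp only [ne_eq, Fin.mk.injEq]; omega
  rw [phiGlobal, ← middleProd, middleProd_update_of_not_mem q (by simp) z, update_self,
    update_of_ne h₀, update_of_ne hₘ]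
  ring

theorem differentiable_phiGlobal_update {j : Fin m} (h₀ : j ≠ ⟨0, by omega⟩)
    (h₁ : j ≠ ⟨1, by omega⟩) : Differentiable ℂ fun z => phiGlobal m hm (update q j z) := by
  simp only [phiGlobal, update_of_ne h₀.symm, update_of_ne h₁.symm, ← Finset.prod_filter]
  fun_prop

end Restrictions

/-- explicit global harmonic morphism: for every `m ≥ 3` the map
`φ(q) = (q¹ − q^m q̄²)(q² + q^m q̄¹)·q³⋯q^{m−1}` satisfies `Δφ = 0` and
`Σ_{i=1}^{2m}(∂φ/∂x^i)² = 0` everywhere on `ℂ^m ≅ ℝ^{2m}`; i.e. it is a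
globally defined harmonic morphism. -/
theorem explicit_global_harmonic_morphism {m : ℕ} (hm : 3 ≤ m) :
    ∀ q : Fin m → ℂ, lap (phiGlobal m hm) q = 0 ∧ hwc (phiGlobal m hm) q = 0 := by
  intro q
  have h₀₁ : (⟨0, by omega⟩ : Fin m) ≠ ⟨1, by omega⟩ := by simp
  have hφ := contDiff_phiGlobal hm
  have hol (j : Fin m) (hj : j ≠ ⟨0, by omega⟩ ∧ j ≠ ⟨1, by omega⟩) :=
    differentiable_phiGlobal_update hm q hj.1 hj.2
  rw [lap_eq_sum_lap₁ hφ, hwc_eq_sum_hwc₁ (hφ.differentiable two_ne_zero),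
    Fintype.sum_eq_add _ _ h₀₁ fun j hj => (hol j hj).lap₁_eq_zero _,
    Fintype.sum_eq_add _ _ h₀₁ fun j hj => (hol j hj).hwc₁_eq_zero _,
    phiGlobal_update_zero, phiGlobal_update_one, lap₁_mul_conj, lap₁_mul_conj, hwc₁_mul_conj,
    hwc₁_mul_conj]
  constructor <;> ring
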